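/- arXiv:1704.08742 — 3 statements merged into one kernel-verified Lean document; each statement's English description precedes it below -/
import Mathlib

section
/- Correctness of the sequential strong rule under the unit-slope bound: for each λ in (0, λ_max] let β̂(λ) be a minimizer of f_λ and set c_j(λ) = x_jᵀ(y − Xβ̂(λ))/n. Fix an index j and suppose the non-expansiveness (unit-slope) bound |c_j(λ) − c_j(λ')| ≤ |λ − λ'| holds for all λ, λ' ∈ (0, λ_max]. If 0 < λ_{k+1} ≤ λ_k ≤ λ_max and |c_j(λ_k)| < 2λ_{k+1} − λ_k, then |c_j(λ_{k+1})| < λ_{k+1}, and consequently β̂_j(λ_{k+1}) = 0. -/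
/-- The lasso objective `f_λ(β) = (1/(2n))‖y − Xβ‖² + λ‖β‖₁`. -/
noncomputable def lassoObj (n p : ℕ) (X : Matrix (Fin n) (Fin p) ℝ) (y : Fin n → ℝ)
    (lam : ℝ) (β : Fin p → ℝ) : ℝ :=
  (1 / (2 * (n : ℝ))) * ∑ i, (y i - X.mulVec β i) ^ 2 + lam * ∑ j, |β j|

/-- The inner product `c_j(λ) = x_jᵀ(y − Xβ̂(λ))/n`. -/
noncomputable def lassoCorr (n p : ℕ) (X : Matrix (Fin n) (Fin p) ℝ) (y : Fin n → ℝ)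
    (βh : ℝ → Fin p → ℝ) (j : Fin p) (lam : ℝ) : ℝ :=
  (∑ i, X i j * (y i - X.mulVec (βh lam) i)) / (n : ℝ)

/-- Correctness of the sequential strong rule under the unit-slope bound: if `β̂(λ)`
minimizes `f_λ` for each `λ ∈ (0, λmax]`, the unit-slope bound holds for index `j`,
`0 < λ_{k+1} ≤ λ_k ≤ λmax`, and `|c_j(λ_k)| < 2λ_{k+1} − λ_k`, then
`|c_j(λ_{k+1})| < λ_{k+1}` and `β̂_j(λ_{k+1}) = 0`. -/
theorem strong_rule_correct (n p : ℕ) (hn : 0 < n) (hp : 0 < p)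
    (X : Matrix (Fin n) (Fin p) ℝ) (y : Fin n → ℝ) (lamMax : ℝ) (hlamMax : 0 < lamMax)
    (βh : ℝ → Fin p → ℝ)
    (hmin : ∀ lam ∈ Set.Ioc (0 : ℝ) lamMax,
      ∀ β : Fin p → ℝ, lassoObj n p X y lam (βh lam) ≤ lassoObj n p X y lam β)
    (j : Fin p)
    (hslope : ∀ lam ∈ Set.Ioc (0 : ℝ) lamMax, ∀ lam' ∈ Set.Ioc (0 : ℝ) lamMax,
      |lassoCorr n p X y βh j lam - lassoCorr n p X y βh j lam'| ≤ |lam - lam'|)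
    (lamk lamk1 : ℝ) (h1 : 0 < lamk1) (h2 : lamk1 ≤ lamk) (h3 : lamk ≤ lamMax)
    (hrule : |lassoCorr n p X y βh j lamk| < 2 * lamk1 - lamk) :
    |lassoCorr n p X y βh j lamk1| < lamk1 ∧ βh lamk1 j = 0 := by
  have hk : lamk ∈ Set.Ioc (0 : ℝ) lamMax := ⟨lt_of_lt_of_le h1 h2, h3⟩
  have hk1 : lamk1 ∈ Set.Ioc (0 : ℝ) lamMax := ⟨h1, le_trans h2 h3⟩
  have habs : |lassoCorr n p X y βh j lamk1| < lamk1 := by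
    have hs := hslope lamk1 hk1 lamk hk
    have h4 : |lamk1 - lamk| = lamk - lamk1 := by
      rw [abs_of_nonpos (by linarith)]; ring
    calc |lassoCorr n p X y βh j lamk1|
        ≤ |lassoCorr n p X y βh j lamk1 - lassoCorr n p X y βh j lamk|
          + |lassoCorr n p X y βh j lamk| := by
          have := abs_add_le (lassoCorr n p X y βh j lamk1 - lassoCorr n p X y βh j lamk)
            (lassoCorr n p X y βh j lamk)
          simpa using this
      _ < (lamk - lamk1) + (2 * lamk1 - lamk) := by
          rw [← h4]; exact add_lt_add_of_le_of_lt hs hrule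
      _ = lamk1 := by ring
  refine ⟨habs, ?_⟩
  set β := βh lamk1 with hβ
  set c := lassoCorr n p X y βh j lamk1 with hc
  set Q : ℝ := ∑ i, (X i j) ^ 2 with hQ
  have hnR : (0 : ℝ) < (n : ℝ) := by exact_mod_cast hn
  have hQ0 : 0 ≤ Q := Finset.sum_nonneg fun i _ => sq_nonneg _
  set A : ℝ := Q / (2 * n) with hA
  have hA0 : 0 ≤ A := div_nonneg hQ0 (by positivity)
  -- key variational inequality from minimality
  have key : ∀ t : ℝ, 0 ≤ t ^ 2 * A - t * c + lamk1 * (|β j + t| - |β j|) := by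
    intro t
    have hmv : ∀ i, X.mulVec (Function.update β j (β j + t)) i = X.mulVec β i + t * X i j := by
      intro i
      have hupd : Function.update β j (β j + t) = β + Pi.single j t := by
        funext k
        rcases eq_or_ne k j with rfl | hkj
        · simp
        · simp [Function.update_of_ne hkj, Pi.single_eq_of_ne hkj]
      rw [hupd, Matrix.mulVec_add]
      simp [Matrix.mulVec_single, mul_comm]
    have habs' : ∑ k, |Function.update β j (β j + t) k|
        = |β j + t| + ∑ k ∈ Finset.univ \ {j}, |β k| := by
      have h0 : ∀ k, |Function.update β j (β j + t) k|
          = Function.update (fun k => |β k|) j (|β j + t|) k := by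
        intro k
        rcases eq_or_ne k j with rfl | hkj
        · simp
        · simp [Function.update_of_ne hkj]
      rw [Finset.sum_congr rfl fun k _ => h0 k,
        Finset.sum_update_of_mem (Finset.mem_univ j)]
    have habs2 : ∑ k, |β k| = |β j| + ∑ k ∈ Finset.univ \ {j}, |β k| := by
      have h0 := Finset.sum_update_of_mem (Finset.mem_univ j) (fun k => |β k|) (|β j|)
      rw [← h0]
      apply Finset.sum_congr rfl
      intro k _
      rcases eq_or_ne k j with rfl | hkj
      · simp
      · simp [Function.update_of_ne hkj]
    have hm := hmin lamk1 hk1 (Function.update β j (β j + t))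
    rw [lassoObj, lassoObj] at hm
    rw [← hβ] at hm
    have hsq : ∑ i, (y i - X.mulVec (Function.update β j (β j + t)) i) ^ 2
        = ∑ i, (y i - X.mulVec β i) ^ 2
          - 2 * t * ∑ i, X i j * (y i - X.mulVec β i) + t ^ 2 * Q := by
      rw [hQ, Finset.mul_sum, Finset.mul_sum, ← Finset.sum_sub_distrib,
        ← Finset.sum_add_distrib]
      apply Finset.sum_congr rfl
      intro i _
      rw [hmv i]; ring
    have hS : ∑ i, X i j * (y i - X.mulVec β i) = (n : ℝ) * c := by
      rw [hc, lassoCorr, ← hβ]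
      field_simp
    rw [hsq, habs', habs2, hS] at hm
    have hexp : (1 / (2 * (n:ℝ)))
          * (∑ i, (y i - X.mulVec β i) ^ 2 - 2 * t * ((n:ℝ) * c) + t ^ 2 * Q)
        = (1 / (2 * (n:ℝ))) * ∑ i, (y i - X.mulVec β i) ^ 2 - t * c + t ^ 2 * A := by
      rw [hA]; field_simp
    rw [hexp] at hm
    nlinarith [hm]
  -- derive β j = 0
  by_contra hb0
  have hbpos : 0 < |β j| := abs_pos.mpr hb0
  have heps : 0 < lamk1 * |β j| - β j * c := by
    have h5 : |β j * c| < |β j| * lamk1 := by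
      rw [abs_mul]
      exact mul_lt_mul_of_pos_left habs hbpos
    nlinarith [le_abs_self (β j * c)]
  set ε := lamk1 * |β j| - β j * c with hε
  set s : ℝ := min 1 (ε / (2 * ((β j)^2 * A + 1))) with hs
  have hden : 0 < (β j)^2 * A + 1 := by positivity
  have hspos : 0 < s := lt_min one_pos (by positivity)
  have hsle1 : s ≤ 1 := min_le_left _ _
  have hsA : s * ((β j)^2 * A) < ε := by
    have h5 : s ≤ ε / (2 * ((β j)^2 * A + 1)) := min_le_right _ _
    have h6 : s * ((β j)^2 * A) ≤ (ε / (2 * ((β j)^2 * A + 1))) * ((β j)^2 * A) :=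
      mul_le_mul_of_nonneg_right h5 (by positivity)
    have h7 : (ε / (2 * ((β j)^2 * A + 1))) * ((β j)^2 * A) < ε := by
      rw [div_mul_eq_mul_div, div_lt_iff₀ (by positivity)]
      nlinarith
    linarith
  have hk2 := key (-(s * β j))
  have habsterm : |β j + -(s * β j)| = (1 - s) * |β j| := by
    have h5 : β j + -(s * β j) = (1 - s) * β j := by ring
    rw [h5, abs_mul, abs_of_nonneg (by linarith)]
  rw [habsterm] at hk2
  have hring : (-(s * β j)) ^ 2 * A - (-(s * β j)) * c
        + lamk1 * ((1 - s) * |β j| - |β j|)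
      = s * (β j * c + s * ((β j) ^ 2 * A)) - s * (lamk1 * |β j|) := by ring
  rw [hring] at hk2
  have hstep : lamk1 * |β j| ≤ β j * c + s * ((β j) ^ 2 * A) :=
    le_of_mul_le_mul_left (by linarith) hspos
  linarith [hstep, hsA]
end

section
/- BEDPP safe rule for the lasso (Theorem 2.1): assume the standardization condition holds, let λ_m = max_{1≤j≤p} |x_jᵀy| / n > 0, and let x_* be a column attaining this maximum. For any λ with 0 < λ ≤ λ_m, if β̂(λ) is a minimizer of f_λ and the index j satisfies |(λ_m + λ) x_jᵀy − (λ_m − λ) · sign(x_*ᵀy) · λ_m · x_jᵀx_*| < 2nλλ_m − (λ_m − λ)√(n‖y‖² − n²λ_m²), then β̂_j(λ) = 0. -/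
lemma bedpp_sign_mul_self (x : ℝ) : Real.sign x * x = |x| := by
  rcases lt_trichotomy x 0 with h | h | h
  · rw [Real.sign_of_neg h, abs_of_neg h]; ring
  · simp [h]
  · rw [Real.sign_of_pos h, abs_of_pos h]; ring

lemma bedpp_abs_sign_le_one (x : ℝ) : |Real.sign x| ≤ 1 := by
  rcases lt_trichotomy x 0 with h | h | h
  · rw [Real.sign_of_neg h]; norm_num
  · simp [h]
  · rw [Real.sign_of_pos h]; norm_num

set_option maxHeartbeats 2000000 in
/-- BEDPP safe rule for the lasso (Theorem 2.1): under standardization, with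
`λ_m = max_j |x_jᵀy|/n > 0` attained at column `x_*`, for `0 < λ ≤ λ_m`, if
`|(λ_m + λ)x_jᵀy − (λ_m − λ)·sign(x_*ᵀy)·λ_m·x_jᵀx_*|
  < 2nλλ_m − (λ_m − λ)√(n‖y‖² − n²λ_m²)`,
then any minimizer `β̂(λ)` of `f_λ` satisfies `β̂_j(λ) = 0`. -/
theorem bedpp_lasso (n p : ℕ) (hn : 0 < n) (hp : 0 < p)
    (X : Matrix (Fin n) (Fin p) ℝ) (y : Fin n → ℝ)
    -- standardization condition
    (hy0 : ∑ i, y i = 0)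
    (hx0 : ∀ j, ∑ i, X i j = 0)
    (hx1 : ∀ j, (1 / (n : ℝ)) * ∑ i, (X i j) ^ 2 = 1)
    -- λ_m is the maximum of |x_jᵀy|/n, attained at column jstar, and positive
    (lm : ℝ) (hlm : 0 < lm)
    (hub : ∀ j, |∑ i, X i j * y i| / (n : ℝ) ≤ lm)
    (jstar : Fin p) (hatt : |∑ i, X i jstar * y i| / (n : ℝ) = lm)
    (lam : ℝ) (hlam : 0 < lam) (hlamle : lam ≤ lm)
    (βh : Fin p → ℝ)
    (hmin : ∀ β : Fin p → ℝ, lassoObj n p X y lam βh ≤ lassoObj n p X y lam β)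
    (j : Fin p)
    (hrule : |(lm + lam) * (∑ i, X i j * y i) -
        (lm - lam) * Real.sign (∑ i, X i jstar * y i) * lm * (∑ i, X i j * X i jstar)| <
      2 * (n : ℝ) * lam * lm -
        (lm - lam) * Real.sqrt ((n : ℝ) * (∑ i, (y i) ^ 2) - (n : ℝ) ^ 2 * lm ^ 2)) :
    βh j = 0 := by
  have hN : (0:ℝ) < (n:ℝ) := by exact_mod_cast hn
  have hcol : ∀ k, ∑ i, (X i k)^2 = (n:ℝ) := by
    intro k
    have h := hx1 k
    field_simp at h
    linarith
  set ρ : Fin n → ℝ := fun i => y i - X.mulVec βh i with hρdef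
  set D : Fin p → ℝ := fun k => ∑ i, X i k * ρ i with hDdef
  -- master inequality from minimality
  have master : ∀ (k : Fin p) (ε : ℝ),
      ε * D k ≤ (n:ℝ) * ε^2 / 2 + (n:ℝ) * lam * (|βh k + ε| - |βh k|) := by
    intro k ε
    set β' : Fin p → ℝ := fun m => βh m + ε * (if m = k then 1 else 0) with hβ'
    have hmv : ∀ i, X.mulVec β' i = X.mulVec βh i + ε * X i k := by
      intro i
      simp only [Matrix.mulVec, dotProduct, hβ']
      have h1 : ∀ m : Fin p, X i m * (βh m + ε * (if m = k then 1 else 0))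
          = X i m * βh m + (if m = k then ε * X i m else 0) := by
        intro m; by_cases h : m = k <;> simp [h] <;> ring
      rw [Finset.sum_congr rfl fun m _ => h1 m, Finset.sum_add_distrib,
        Finset.sum_ite_eq' Finset.univ k (fun m => ε * X i m)]
      simp
    have h1 := hmin β'
    simp only [lassoObj] at h1
    have hq : ∀ i, (y i - X.mulVec β' i)^2
        = (y i - X.mulVec βh i)^2 - 2*ε*(X i k * ρ i) + ε^2 * (X i k)^2 := by
      intro i; rw [hmv i]; simp only [hρdef]; ring
    rw [Finset.sum_congr rfl fun i _ => hq i] at h1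
    have habs : ∑ m, |β' m| = (∑ m, |βh m|) + (|βh k + ε| - |βh k|) := by
      have h2 : ∀ m : Fin p, |β' m| = |βh m| + (if m = k then |βh k + ε| - |βh k| else 0) := by
        intro m; by_cases h : m = k <;> simp [hβ', h]
      rw [Finset.sum_congr rfl fun m _ => h2 m, Finset.sum_add_distrib,
        Finset.sum_ite_eq' Finset.univ k (fun _ => |βh k + ε| - |βh k|)]
      simp
    rw [habs] at h1
    rw [Finset.sum_add_distrib, Finset.sum_sub_distrib] at h1
    rw [← Finset.mul_sum, ← Finset.mul_sum, hcol k] at h1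
    have h2N : (0:ℝ) < 2 * (n:ℝ) := by linarith
    have hgoal : D k = ∑ i, X i k * ρ i := rfl
    rw [hgoal]
    set R2 := ∑ i, (y i - X.mulVec βh i)^2
    set Dk := ∑ i, X i k * ρ i
    set B := ∑ m, |βh m|
    have h2n : (2*(n:ℝ)) ≠ 0 := by positivity
    field_simp at h1
    nlinarith [h1, hN]
  -- dual feasibility : |D k| ≤ n * lam
  have feas : ∀ k, |D k| ≤ (n:ℝ) * lam := by
    intro k
    have hstep : ∀ u : ℝ, 0 < u → (D k)^2 ≤ (n:ℝ)*u*(D k)^2/2 + (n:ℝ)*lam*|D k| := by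
      intro u hu
      have h1 := master k (u * D k)
      have habs : |βh k + u * D k| - |βh k| ≤ u * |D k| := by
        have h2 := abs_sub_abs_le_abs_sub (βh k + u * D k) (βh k)
        have h3 : |βh k + u * D k - βh k| = u * |D k| := by
          rw [show βh k + u * D k - βh k = u * D k by ring, abs_mul, abs_of_pos hu]
        linarith
      have h4 : u * D k * D k ≤ (n:ℝ)*(u*D k)^2/2 + (n:ℝ)*lam*(u*|D k|) := by
        calc u * D k * D k = (u * D k) * D k := by ring
        _ ≤ (n:ℝ)*(u*D k)^2/2 + (n:ℝ)*lam*(|βh k + u*D k| - |βh k|) := h1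
        _ ≤ (n:ℝ)*(u*D k)^2/2 + (n:ℝ)*lam*(u*|D k|) := by
            nlinarith [mul_le_mul_of_nonneg_left habs (by positivity : (0:ℝ) ≤ (n:ℝ)*lam)]
      nlinarith [h4, hu]
    by_contra hc
    push_neg at hc
    have hD0 : 0 < |D k| := lt_of_le_of_lt (by positivity) hc
    set u : ℝ := (|D k| - (n:ℝ)*lam) / ((n:ℝ) * |D k|) with hu
    have hupos : 0 < u := div_pos (by linarith) (by positivity)
    have hu' : (n:ℝ) * u * |D k| = |D k| - (n:ℝ)*lam := by
      rw [hu]; field_simp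
    have hs := hstep u hupos
    have hDk2 : (D k)^2 = |D k|^2 := (sq_abs _).symm
    have hu2 : (n:ℝ) * u * |D k|^2 = (|D k| - (n:ℝ)*lam) * |D k| := by
      calc (n:ℝ) * u * |D k|^2 = ((n:ℝ) * u * |D k|) * |D k| := by ring
      _ = (|D k| - (n:ℝ)*lam) * |D k| := by rw [hu']
    nlinarith [hs, hu2, hD0, hc, hDk2, mul_lt_mul_of_pos_right hc hD0]
  -- stationarity : βh k * D k = n * lam * |βh k|
  have stat : ∀ k, βh k * D k = (n:ℝ) * lam * |βh k| := by
    intro k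
    by_cases hbk : βh k = 0
    · simp [hbk]
    · have key : ∀ t : ℝ, |t| < 1 →
          t * (βh k * D k - (n:ℝ) * lam * |βh k|) ≤ (n:ℝ) * t^2 * (βh k)^2 / 2 := by
        intro t htlt
        have h1 := master k (t * βh k)
        obtain ⟨ha, hb⟩ := abs_lt.mp htlt
        have habs : |βh k + t * βh k| - |βh k| = t * |βh k| := by
          have h2 : |βh k + t * βh k| = |1 + t| * |βh k| := by
            rw [← abs_mul]; ring_nf
          have h3 : |1 + t| = 1 + t := abs_of_pos (by linarith)
          rw [h2, h3]; ring
        rw [habs] at h1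
        nlinarith [h1]
      by_contra hne
      set E : ℝ := βh k * D k - (n:ℝ) * lam * |βh k| with hE
      have hEne : E ≠ 0 := fun h => hne (by rw [hE] at h; linarith)
      have habsE : 0 < |E| := abs_pos.mpr hEne
      set K : ℝ := (n:ℝ) * (βh k)^2 + |E| + 1 with hK
      have hKpos : 0 < K := by positivity
      have h1 := key (E / K) (by
        rw [abs_div, abs_of_pos hKpos, div_lt_one hKpos, hK]
        nlinarith [mul_nonneg hN.le (sq_nonneg (βh k))])
      have hEK : E / K * E = E^2 / K := by ring
      rw [hEK] at h1
      have h2 : E^2 / K * K ≤ (n:ℝ) * (E/K)^2 * (βh k)^2 / 2 * K :=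
        mul_le_mul_of_nonneg_right h1 hKpos.le
      have h3 : E^2 / K * K = E^2 := by field_simp
      have h4 : (n:ℝ) * (E/K)^2 * (βh k)^2 / 2 * K = (n:ℝ) * E^2 * (βh k)^2 / (2*K) := by
        field_simp
      rw [h3, h4] at h2
      have h5 : (n:ℝ) * E^2 * (βh k)^2 / (2*K) < E^2 := by
        rw [div_lt_iff₀ (by positivity)]
        have hE2 : 0 < E^2 := by positivity
        nlinarith [hE2, habsE, sq_nonneg (βh k), hN]
      linarith
  -- sum swap
  have hswap : ∀ f : Fin n → ℝ, ∑ i, X.mulVec βh i * f i = ∑ k, βh k * ∑ i, X i k * f i := by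
    intro f
    simp only [Matrix.mulVec, dotProduct, Finset.sum_mul]
    rw [Finset.sum_comm]
    refine Finset.sum_congr rfl fun k _ => ?_
    rw [Finset.mul_sum]
    exact Finset.sum_congr rfl fun i _ => by ring
  set B := ∑ m, |βh m| with hB
  have hBnn : 0 ≤ B := Finset.sum_nonneg fun m _ => abs_nonneg _
  set R2 := ∑ i, (ρ i)^2 with hR2
  set Y2 := ∑ i, (y i)^2 with hY2
  set P := ∑ i, y i * ρ i with hP
  -- key1 : P - R2 = n * lam * B
  have key1 : P - R2 = (n:ℝ) * lam * B := by
    have h1 : P - R2 = ∑ i, X.mulVec βh i * ρ i := by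
      rw [hP, hR2, ← Finset.sum_sub_distrib]
      refine Finset.sum_congr rfl fun i _ => ?_
      have : ρ i = y i - X.mulVec βh i := rfl
      rw [this]; ring
    rw [h1, hswap ρ]
    rw [hB, Finset.mul_sum]
    exact Finset.sum_congr rfl fun k _ => by rw [stat k]; try ring
  -- key2 : Y2 - P ≤ n * lm * B
  have key2 : Y2 - P ≤ (n:ℝ) * lm * B := by
    have h1 : Y2 - P = ∑ k, βh k * ∑ i, X i k * y i := by
      rw [← hswap y, hY2, hP, ← Finset.sum_sub_distrib]
      refine Finset.sum_congr rfl fun i _ => ?_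
      have : ρ i = y i - X.mulVec βh i := rfl
      rw [this]; ring
    rw [h1, hB, Finset.mul_sum]
    refine Finset.sum_le_sum fun k _ => ?_
    have h2 : |∑ i, X i k * y i| ≤ (n:ℝ) * lm := by
      have := hub k
      rw [div_le_iff₀ hN] at this
      linarith
    calc βh k * ∑ i, X i k * y i ≤ |βh k * ∑ i, X i k * y i| := le_abs_self _
    _ = |βh k| * |∑ i, X i k * y i| := abs_mul _ _
    _ ≤ |βh k| * ((n:ℝ) * lm) := by
        exact mul_le_mul_of_nonneg_left h2 (abs_nonneg _)
    _ = (n:ℝ) * lm * |βh k| := by ring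
  -- jstar quantities
  set Ay := ∑ i, X i jstar * y i with hAy
  set sgn := Real.sign Ay with hsgn
  have hAyabs : |Ay| = (n:ℝ) * lm := by
    have := hatt
    rw [div_eq_iff (ne_of_gt hN)] at this
    rw [this]; ring
  have hsgnAy : sgn * Ay = (n:ℝ) * lm := by rw [hsgn, bedpp_sign_mul_self, hAyabs]
  have hsgnabs : |sgn| ≤ 1 := bedpp_abs_sign_le_one _
  have hsgnsq : sgn^2 ≤ 1 := by
    nlinarith [sq_abs sgn, abs_nonneg sgn, hsgnabs]
  set S := D jstar with hS
  have hsS : sgn * S ≤ (n:ℝ) * lam := by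
    calc sgn * S ≤ |sgn * S| := le_abs_self _
    _ = |sgn| * |S| := abs_mul _ _
    _ ≤ 1 * ((n:ℝ)*lam) := by
        apply mul_le_mul hsgnabs (feas jstar) (abs_nonneg _) zero_le_one
    _ = (n:ℝ)*lam := one_mul _
  -- the q vector
  set q : Fin n → ℝ := fun i => 2*lm*ρ i - (lm+lam)*y i + (lm-lam)*lm*sgn*X i jstar with hq
  have hq2expand : ∑ i, (q i)^2
      = 4*lm^2*R2 + (lm+lam)^2*Y2 + ((lm-lam)*lm*sgn)^2*(n:ℝ)
        - 4*lm*(lm+lam)*P + 4*lm^2*(lm-lam)*sgn*S - 2*(lm+lam)*((lm-lam)*lm*sgn)*Ay := by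
    have h1 : ∀ i, (q i)^2
        = 4*lm^2*(ρ i)^2 + (lm+lam)^2*(y i)^2 + ((lm-lam)*lm*sgn)^2*(X i jstar)^2
          - 4*lm*(lm+lam)*(y i * ρ i) + 4*lm^2*(lm-lam)*sgn*(X i jstar * ρ i)
          - 2*(lm+lam)*((lm-lam)*lm*sgn)*(X i jstar * y i) := by
      intro i; simp only [hq]; ring
    rw [Finset.sum_congr rfl fun i _ => h1 i]
    simp only [Finset.sum_add_distrib, Finset.sum_sub_distrib, ← Finset.mul_sum,
      hR2, hY2, hP, hS, hAy, hDdef]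
    rw [hcol jstar]
    try ring
  have hq2bound : ∑ i, (q i)^2 ≤ (lm-lam)^2 * (Y2 - (n:ℝ)*lm^2) := by
    rw [hq2expand]
    have f1 : 4*lm^2*(P - R2) = 4*lm^2*((n:ℝ)*lam*B) := by rw [key1]
    have f2 : 4*lm*lam*(Y2-P) ≤ 4*lm*lam*((n:ℝ)*lm*B) :=
      mul_le_mul_of_nonneg_left key2 (by positivity)
    have f3 : 4*lm^2*(lm-lam)*(sgn*S) ≤ 4*lm^2*(lm-lam)*((n:ℝ)*lam) :=
      mul_le_mul_of_nonneg_left hsS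
        (mul_nonneg (by positivity) (by linarith))
    have f4 : (lm-lam)^2*lm^2*(n:ℝ)*sgn^2 ≤ (lm-lam)^2*lm^2*(n:ℝ)*1 :=
      mul_le_mul_of_nonneg_left hsgnsq (by positivity)
    have f5 : 2*(lm+lam)*(lm-lam)*lm*(sgn*Ay) = 2*(lm+lam)*(lm-lam)*lm*((n:ℝ)*lm) := by
      rw [hsgnAy]
    nlinarith [f1, f2, f3, f4, f5]
  -- Cauchy-Schwarz at jstar : n^2 lm^2 ≤ n Y2
  have hCSstar : ((n:ℝ)*lm)^2 ≤ (n:ℝ) * Y2 := by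
    have h1 := Finset.sum_mul_sq_le_sq_mul_sq Finset.univ (fun i => X i jstar) y
    rw [hcol jstar] at h1
    calc ((n:ℝ)*lm)^2 = |Ay|^2 := by rw [hAyabs]
    _ = Ay^2 := sq_abs _
    _ ≤ (n:ℝ) * Y2 := h1
  set W := Real.sqrt ((n:ℝ) * Y2 - (n:ℝ)^2 * lm^2) with hW
  have hWsq : W^2 = (n:ℝ) * Y2 - (n:ℝ)^2 * lm^2 := by
    have harg : (0:ℝ) ≤ (n:ℝ)*Y2 - (n:ℝ)^2*lm^2 := by nlinarith [hCSstar]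
    rw [hW]
    exact Real.sq_sqrt harg
  have hWnn : 0 ≤ W := Real.sqrt_nonneg _
  -- T and its identity
  set aj := ∑ i, X i j * y i with haj
  set Gj := ∑ i, X i j * X i jstar with hGj
  set T := ∑ i, X i j * q i with hT
  have hTid : T = 2*lm*(D j) - (lm+lam)*aj + (lm-lam)*lm*sgn*Gj := by
    have h1 : ∀ i, X i j * q i
        = 2*lm*(X i j * ρ i) - (lm+lam)*(X i j * y i) + (lm-lam)*lm*sgn*(X i j * X i jstar) := by
      intro i; simp only [hq]; ring
    rw [hT, Finset.sum_congr rfl fun i _ => h1 i]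
    simp only [Finset.sum_add_distrib, Finset.sum_sub_distrib, ← Finset.mul_sum,
      haj, hGj, hDdef]
    try ring
  have hTbound : |T| ≤ (lm - lam) * W := by
    have h1 : T^2 ≤ (n:ℝ) * ∑ i, (q i)^2 := by
      have := Finset.sum_mul_sq_le_sq_mul_sq Finset.univ (fun i => X i j) q
      rw [hcol j] at this
      exact this
    have h2 : T^2 ≤ ((lm-lam)*W)^2 := by
      have h3 : ((lm-lam)*W)^2 = (lm-lam)^2 * ((n:ℝ)*Y2 - (n:ℝ)^2*lm^2) := by
        rw [mul_pow, hWsq]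
      rw [h3]
      calc T^2 ≤ (n:ℝ) * ∑ i, (q i)^2 := h1
      _ ≤ (n:ℝ) * ((lm-lam)^2 * (Y2 - (n:ℝ)*lm^2)) := by
          exact mul_le_mul_of_nonneg_left hq2bound (le_of_lt hN)
      _ = (lm-lam)^2 * ((n:ℝ)*Y2 - (n:ℝ)^2*lm^2) := by ring
    have h4 : |T| = Real.sqrt (T^2) := (Real.sqrt_sq_eq_abs T).symm
    rw [h4]
    calc Real.sqrt (T^2) ≤ Real.sqrt (((lm-lam)*W)^2) := Real.sqrt_le_sqrt h2
    _ = |(lm-lam)*W| := Real.sqrt_sq_eq_abs _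
    _ = (lm-lam)*W := abs_of_nonneg (by nlinarith [hWnn, hlamle])
  -- triangle inequality to bound |D j|
  have hDid : 2*lm*(D j) = ((lm+lam)*aj - (lm-lam)*sgn*lm*Gj) + T := by
    rw [hTid]; ring
  have hDjbound : |D j| < (n:ℝ) * lam := by
    have h1 : |2*lm*(D j)| ≤ |(lm+lam)*aj - (lm-lam)*sgn*lm*Gj| + |T| := by
      rw [hDid]; exact abs_add_le _ _
    have h2 : |2*lm*(D j)| < 2*(n:ℝ)*lam*lm := by
      calc |2*lm*(D j)| ≤ |(lm+lam)*aj - (lm-lam)*sgn*lm*Gj| + |T| := h1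
      _ < (2*(n:ℝ)*lam*lm - (lm-lam)*W) + (lm-lam)*W := by
          exact add_lt_add_of_lt_of_le hrule hTbound
      _ = 2*(n:ℝ)*lam*lm := by ring
    rw [abs_mul] at h2
    have h3 : |2*lm| = 2*lm := abs_of_pos (by linarith)
    rw [h3] at h2
    nlinarith [h2, hlm]
  -- conclude
  by_contra hne
  have h1 := stat j
  have h2 : |βh j * D j| = abs ((n:ℝ) * lam * |βh j|) := by rw [h1]
  rw [abs_mul] at h2
  have h3 : abs ((n:ℝ) * lam * |βh j|) = (n:ℝ) * lam * |βh j| := by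
    apply abs_of_nonneg; positivity
  rw [h3] at h2
  have h4 : 0 < |βh j| := abs_pos.mpr hne
  have h5 : |D j| = (n:ℝ) * lam := by
    have h6 : |βh j| * |D j| = |βh j| * ((n:ℝ)*lam) := by linarith [h2]
    exact mul_left_cancel₀ (ne_of_gt h4) h6
  linarith [hDjbound, h5.ge, h5.le]
end

section
/- SEDPP sequential safe rule for the lasso (Theorem 2.2, part 1): assume the standardization condition holds and let λ_m = max_{1≤j≤p} |x_jᵀy| / n. Let 0 < λ_{k+1} < λ_k ≤ λ_m, let β̂(λ_k) be a minimizer of f_{λ_k} with Xβ̂(λ_k) ≠ 0, and set c = (λ_k − λ_{k+1})/(λ_k λ_{k+1}) and a = yᵀXβ̂(λ_k). If β̂(λ_{k+1}) is a minimizer of f_{λ_{k+1}} and the index j satisfies | x_jᵀ(y − Xβ̂(λ_k))/λ_k + (c/2)( x_jᵀy − a · x_jᵀXβ̂(λ_k)/‖Xβ̂(λ_k)‖² ) | < n − (c/2)√( n‖y‖² − n a² / ‖Xβ̂(λ_k)‖² ), then β̂_j(λ_{k+1}) = 0. -/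
lemma lasso_key (n p : ℕ) (hn : 0 < n) (X : Matrix (Fin n) (Fin p) ℝ) (y : Fin n → ℝ)
    (lam : ℝ) (β : Fin p → ℝ)
    (hmin : ∀ b, lassoObj n p X y lam β ≤ lassoObj n p X y lam b)
    (j : Fin p) (t : ℝ) :
    t * (∑ i, X i j * (y i - X.mulVec β i)) ≤
      t ^ 2 * (∑ i, (X i j) ^ 2) / 2 + (n : ℝ) * lam * (|β j + t| - |β j|) := by
  have hN : (0:ℝ) < (n:ℝ) := by exact_mod_cast hn
  set β' := Function.update β j (β j + t) with hβ'
  have hmv : ∀ i, X.mulVec β' i = X.mulVec β i + t * X i j := by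
    intro i
    have : ∑ k, (X i k * β' k - X i k * β k) = X i j * t := by
      rw [Finset.sum_eq_single j]
      · simp [hβ']; ring
      · intro b _ hb; simp [hβ', Function.update_of_ne hb]
      · simp
    have h2 : ∑ k, (X i k * β' k - X i k * β k)
        = (∑ k, X i k * β' k) - ∑ k, X i k * β k := by
      rw [Finset.sum_sub_distrib]
    simp only [Matrix.mulVec, dotProduct]
    rw [h2] at this
    linarith [this]
  have habs : ∑ k, |β' k| = (∑ k, |β k|) + (|β j + t| - |β j|) := by
    have : ∑ k, (|β' k| - |β k|) = |β j + t| - |β j| := by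
      rw [Finset.sum_eq_single j]
      · simp [hβ']
      · intro b _ hb; simp [hβ', Function.update_of_ne hb]
      · simp
    rw [Finset.sum_sub_distrib] at this
    linarith
  have hq : ∑ i, (y i - X.mulVec β' i) ^ 2
      = (∑ i, (y i - X.mulVec β i) ^ 2)
        - 2 * t * (∑ i, X i j * (y i - X.mulVec β i))
        + t ^ 2 * ∑ i, (X i j) ^ 2 := by
    have : ∀ i, (y i - X.mulVec β' i) ^ 2
        = (y i - X.mulVec β i) ^ 2 - 2 * t * (X i j * (y i - X.mulVec β i))
          + t ^ 2 * (X i j) ^ 2 := by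
      intro i; rw [hmv i]; ring
    rw [Finset.sum_congr rfl (fun i _ => this i), Finset.sum_add_distrib,
      Finset.sum_sub_distrib, ← Finset.mul_sum, ← Finset.mul_sum]
  have h := hmin β'
  unfold lassoObj at h
  rw [hq, habs] at h
  have h2 := mul_le_mul_of_nonneg_left h (by positivity : (0:ℝ) ≤ 2*(n:ℝ))
  have expand : ∀ Q L' : ℝ, (2*(n:ℝ)) * (1/(2*(n:ℝ)) * Q + lam * L')
      = Q + 2*(n:ℝ)*lam*L' := by
    intro Q L'; field_simp
  rw [expand, expand] at h2
  linarith

lemma lasso_kkt (n p : ℕ) (hn : 0 < n) (X : Matrix (Fin n) (Fin p) ℝ) (y : Fin n → ℝ)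
    (lam : ℝ) (hlam : 0 ≤ lam) (β : Fin p → ℝ)
    (hmin : ∀ b, lassoObj n p X y lam β ≤ lassoObj n p X y lam b) (j : Fin p) :
    |∑ i, X i j * (y i - X.mulVec β i)| ≤ (n : ℝ) * lam ∧
    (∑ i, X i j * (y i - X.mulVec β i)) * β j = (n : ℝ) * lam * |β j| := by
  have hN : (0:ℝ) < (n:ℝ) := by exact_mod_cast hn
  set D := ∑ i, X i j * (y i - X.mulVec β i) with hD
  set S := ∑ i, (X i j) ^ 2 with hS
  have hS0 : 0 ≤ S := Finset.sum_nonneg fun i _ => sq_nonneg _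
  have key : ∀ t : ℝ, t * D ≤ t ^ 2 * S / 2 + (n:ℝ) * lam * (|β j + t| - |β j|) :=
    fun t => lasso_key n p hn X y lam β hmin j t
  have habs : ∀ t : ℝ, |β j + t| - |β j| ≤ |t| := by
    intro t
    have := abs_sub_abs_le_abs_sub (β j + t) (β j)
    simpa using this
  -- generic small-t bound
  have htS : ∀ ε > (0:ℝ), ∀ t : ℝ, t ≤ 2 * ε / (S + 1) → 0 ≤ t → t * S / 2 ≤ ε := by
    intro ε hε t h1 h0
    have hS1 : (0:ℝ) < S + 1 := by linarith
    have h2 : t * S ≤ (2 * ε / (S + 1)) * S :=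
      mul_le_mul_of_nonneg_right h1 hS0
    have h3 : (2 * ε / (S + 1)) * (S + 1) = 2 * ε := by field_simp
    have h4 : 0 ≤ 2 * ε / (S + 1) := by positivity
    nlinarith
  have part1 : |D| ≤ (n:ℝ) * lam := by
    rw [abs_le]
    constructor
    · rw [neg_le]
      refine le_of_forall_pos_le_add fun ε hε => ?_
      set t := 2 * ε / (S + 1) with htdef
      have ht : 0 < t := by positivity
      have k := key (-t)
      have hb : |β j + -t| - |β j| ≤ t := by
        have := habs (-t); rwa [abs_neg, abs_of_pos ht] at this
      have : t * (-D) ≤ t * (t * S / 2 + (n:ℝ) * lam) := by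
        nlinarith [mul_le_mul_of_nonneg_left hb (mul_nonneg hN.le hlam)]
      have h5 : -D ≤ t * S / 2 + (n:ℝ) * lam := (mul_le_mul_iff_right₀ ht).mp this
      have := htS ε hε t le_rfl ht.le
      linarith
    · refine le_of_forall_pos_le_add fun ε hε => ?_
      set t := 2 * ε / (S + 1) with htdef
      have ht : 0 < t := by positivity
      have k := key t
      have hb : |β j + t| - |β j| ≤ t := by
        have := habs t; rwa [abs_of_pos ht] at this
      have : t * D ≤ t * (t * S / 2 + (n:ℝ) * lam) := by
        nlinarith [mul_le_mul_of_nonneg_left hb (mul_nonneg hN.le hlam)]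
      have h5 : D ≤ t * S / 2 + (n:ℝ) * lam := (mul_le_mul_iff_right₀ ht).mp this
      have := htS ε hε t le_rfl ht.le
      linarith
  refine ⟨part1, ?_⟩
  rcases lt_trichotomy (β j) 0 with hβ | hβ | hβ
  · -- β j < 0 : D = -n lam
    have hDeq : D = -((n:ℝ) * lam) := by
      have h0 : |D + (n:ℝ) * lam| ≤ 0 := by
        refine le_of_forall_pos_le_add fun ε hε => ?_
        set t := min (-β j / 2) (2 * ε / (S + 1)) with htdef
        have ht : 0 < t := lt_min (by linarith) (by positivity)
        have htβ : t ≤ -β j / 2 := min_le_left _ _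
        have htε := htS ε hε t (min_le_right _ _) ht.le
        have e1 : |β j + t| = -(β j + t) := abs_of_neg (by linarith)
        have e2 : |β j + -t| = -(β j + -t) := abs_of_neg (by linarith)
        have e3 : |β j| = -β j := abs_of_neg hβ
        have k1 := key t
        have k2 := key (-t)
        rw [e1, e3] at k1
        rw [e2, e3] at k2
        have d1 : D ≤ t * S / 2 + -((n:ℝ) * lam) := by
          have : t * D ≤ t * (t * S / 2 + -((n:ℝ) * lam)) := by
            calc t * D ≤ t ^ 2 * S / 2 + (n:ℝ) * lam * (-(β j + t) - -β j) := k1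
              _ = t * (t * S / 2 + -((n:ℝ) * lam)) := by ring
          exact (mul_le_mul_iff_right₀ ht).mp this
        have d2 : -D ≤ t * S / 2 + (n:ℝ) * lam := by
          have : t * (-D) ≤ t * (t * S / 2 + (n:ℝ) * lam) := by
            calc t * (-D) = (-t) * D := by ring
              _ ≤ (-t) ^ 2 * S / 2 + (n:ℝ) * lam * (-(β j + -t) - -β j) := k2
              _ = t * (t * S / 2 + (n:ℝ) * lam) := by ring
          exact (mul_le_mul_iff_right₀ ht).mp this
        rw [abs_le]
        constructor <;> linarith
      have := abs_nonneg (D + (n:ℝ) * lam)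
      have : D + (n:ℝ) * lam = 0 := by
        have := abs_eq_zero.mp (le_antisymm h0 this)
        exact this
      linarith
    rw [hDeq, abs_of_neg hβ]; ring
  · simp [hβ]
  · -- β j > 0 : D = n lam
    have hDeq : D = (n:ℝ) * lam := by
      have h0 : |D - (n:ℝ) * lam| ≤ 0 := by
        refine le_of_forall_pos_le_add fun ε hε => ?_
        set t := min (β j / 2) (2 * ε / (S + 1)) with htdef
        have ht : 0 < t := lt_min (by linarith) (by positivity)
        have htβ : t ≤ β j / 2 := min_le_left _ _
        have htε := htS ε hε t (min_le_right _ _) ht.le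
        have e1 : |β j + t| = β j + t := abs_of_pos (by linarith)
        have e2 : |β j + -t| = β j + -t := abs_of_pos (by linarith)
        have e3 : |β j| = β j := abs_of_pos hβ
        have k1 := key t
        have k2 := key (-t)
        rw [e1, e3] at k1
        rw [e2, e3] at k2
        have d1 : D ≤ t * S / 2 + (n:ℝ) * lam := by
          have : t * D ≤ t * (t * S / 2 + (n:ℝ) * lam) := by
            calc t * D ≤ t ^ 2 * S / 2 + (n:ℝ) * lam * (β j + t - β j) := k1
              _ = t * (t * S / 2 + (n:ℝ) * lam) := by ring
          exact (mul_le_mul_iff_right₀ ht).mp this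
        have d2 : -D ≤ t * S / 2 + -((n:ℝ) * lam) := by
          have : t * (-D) ≤ t * (t * S / 2 + -((n:ℝ) * lam)) := by
            calc t * (-D) = (-t) * D := by ring
              _ ≤ (-t) ^ 2 * S / 2 + (n:ℝ) * lam * (β j + -t - β j) := k2
              _ = t * (t * S / 2 + -((n:ℝ) * lam)) := by ring
          exact (mul_le_mul_iff_right₀ ht).mp this
        rw [abs_le]
        constructor <;> linarith
      have h1 := abs_nonneg (D - (n:ℝ) * lam)
      have : D - (n:ℝ) * lam = 0 := abs_eq_zero.mp (le_antisymm h0 h1)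
      linarith
    rw [hDeq, abs_of_pos hβ]

lemma dot_mulVec (n p : ℕ) (X : Matrix (Fin n) (Fin p) ℝ) (β : Fin p → ℝ) (v : Fin n → ℝ) :
    ∑ i, X.mulVec β i * v i = ∑ k, β k * ∑ i, X i k * v i := by
  simp only [Matrix.mulVec, dotProduct, Finset.sum_mul, Finset.mul_sum]
  rw [Finset.sum_comm]
  exact Finset.sum_congr rfl fun k _ => Finset.sum_congr rfl fun i _ => by ring

set_option maxHeartbeats 800000 in
/-- SEDPP sequential safe rule for the lasso (Theorem 2.2, part 1): under standardization,
with `λ_m = max_j |x_jᵀy|/n`, `0 < λ_{k+1} < λ_k ≤ λ_m`, `β̂(λ_k)` a minimizer of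
`f_{λ_k}` with `Xβ̂(λ_k) ≠ 0`, `c = (λ_k − λ_{k+1})/(λ_kλ_{k+1})`, `a = yᵀXβ̂(λ_k)`, if
`|x_jᵀ(y − Xβ̂(λ_k))/λ_k + (c/2)(x_jᵀy − a·x_jᵀXβ̂(λ_k)/‖Xβ̂(λ_k)‖²)|
  < n − (c/2)√(n‖y‖² − na²/‖Xβ̂(λ_k)‖²)`,
then any minimizer `β̂(λ_{k+1})` of `f_{λ_{k+1}}` satisfies `β̂_j(λ_{k+1}) = 0`. -/
theorem sedpp_lasso (n p : ℕ) (hn : 0 < n) (hp : 0 < p)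
    (X : Matrix (Fin n) (Fin p) ℝ) (y : Fin n → ℝ)
    -- standardization condition
    (hy0 : ∑ i, y i = 0)
    (hx0 : ∀ j, ∑ i, X i j = 0)
    (hx1 : ∀ j, (1 / (n : ℝ)) * ∑ i, (X i j) ^ 2 = 1)
    -- λ_m is the maximum of |x_jᵀy|/n
    (lm : ℝ)
    (hub : ∀ j, |∑ i, X i j * y i| / (n : ℝ) ≤ lm)
    (hatt : ∃ j, |∑ i, X i j * y i| / (n : ℝ) = lm)
    (lamk lamk1 : ℝ) (h1 : 0 < lamk1) (h2 : lamk1 < lamk) (h3 : lamk ≤ lm)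
    (βhk : Fin p → ℝ)
    (hmink : ∀ β : Fin p → ℝ, lassoObj n p X y lamk βhk ≤ lassoObj n p X y lamk β)
    (hXβ : X.mulVec βhk ≠ 0)
    (c a : ℝ) (hc : c = (lamk - lamk1) / (lamk * lamk1))
    (ha : a = ∑ i, y i * X.mulVec βhk i)
    (βhk1 : Fin p → ℝ)
    (hmink1 : ∀ β : Fin p → ℝ, lassoObj n p X y lamk1 βhk1 ≤ lassoObj n p X y lamk1 β)
    (j : Fin p)
    (hrule : |(∑ i, X i j * (y i - X.mulVec βhk i)) / lamk +
        (c / 2) * ((∑ i, X i j * y i) -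
          a * (∑ i, X i j * X.mulVec βhk i) / (∑ i, (X.mulVec βhk i) ^ 2))| <
      (n : ℝ) - (c / 2) * Real.sqrt ((n : ℝ) * (∑ i, (y i) ^ 2) -
        (n : ℝ) * a ^ 2 / (∑ i, (X.mulVec βhk i) ^ 2))) :
    βhk1 j = 0 := by
  have hN : (0:ℝ) < (n:ℝ) := by exact_mod_cast hn
  have hlk : 0 < lamk := lt_trans h1 h2
  have hc0 : 0 < c := by rw [hc]; exact div_pos (by linarith) (by positivity)
  have hsBB : 0 < ∑ i, (X.mulVec βhk i) ^ 2 := by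
    obtain ⟨i0, hi0⟩ := Function.ne_iff.mp hXβ
    exact Finset.sum_pos' (fun i _ => sq_nonneg _)
      ⟨i0, Finset.mem_univ _, sq_pos_of_ne_zero hi0⟩
  have K1 := fun j' => lasso_kkt n p hn X y lamk hlk.le βhk hmink j'
  have K2 := fun j' => lasso_kkt n p hn X y lamk1 h1.le βhk1 hmink1 j'
  set sBB : ℝ := ∑ i, (X.mulVec βhk i) ^ 2 with hsBBdef
  set θk : Fin n → ℝ := fun i => (y i - X.mulVec βhk i) / lamk with hθk
  set θ1 : Fin n → ℝ := fun i => (y i - X.mulVec βhk1 i) / lamk1 with hθ1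
  set u : Fin n → ℝ := fun i => θ1 i - θk i with hudef
  set w : Fin n → ℝ := fun i => y i - (a / sBB) * X.mulVec βhk i with hwdef
  set z : Fin n → ℝ := fun i => u i - (c / 2) * w i with hzdef
  -- dot products with columns
  have hθk_x : ∀ j', ∑ i, X i j' * θk i
      = (∑ i, X i j' * (y i - X.mulVec βhk i)) / lamk := by
    intro j'; rw [Finset.sum_div]
    exact Finset.sum_congr rfl fun i _ => (mul_div_assoc _ _ _).symm
  have hθ1_x : ∀ j', ∑ i, X i j' * θ1 i
      = (∑ i, X i j' * (y i - X.mulVec βhk1 i)) / lamk1 := by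
    intro j'; rw [Finset.sum_div]
    exact Finset.sum_congr rfl fun i _ => (mul_div_assoc _ _ _).symm
  have hθk_bound : ∀ j', |∑ i, X i j' * θk i| ≤ (n:ℝ) := by
    intro j'; rw [hθk_x, abs_div, abs_of_pos hlk, div_le_iff₀ hlk]; exact (K1 j').1
  have hθ1_bound : ∀ j', |∑ i, X i j' * θ1 i| ≤ (n:ℝ) := by
    intro j'; rw [hθ1_x, abs_div, abs_of_pos h1, div_le_iff₀ h1]; exact (K2 j').1
  -- ⟨Xβ̂k, θk⟩ = n‖β̂k‖₁ and  ⟨Xβ̂k, θ⟩ ≤ n‖β̂k‖₁ for feasible θ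
  have e1 : ∑ i, X.mulVec βhk i * θk i = (n:ℝ) * ∑ j', |βhk j'| := by
    rw [dot_mulVec, Finset.mul_sum]
    refine Finset.sum_congr rfl fun j' _ => ?_
    calc βhk j' * ∑ i, X i j' * θk i
        = (∑ i, X i j' * (y i - X.mulVec βhk i)) * βhk j' / lamk := by
          rw [hθk_x j']; ring
      _ = (n:ℝ) * lamk * |βhk j'| / lamk := by rw [(K1 j').2]
      _ = (n:ℝ) * |βhk j'| := by field_simp
  have e2 : ∑ i, X.mulVec βhk i * θ1 i ≤ (n:ℝ) * ∑ j', |βhk j'| := by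
    rw [dot_mulVec, Finset.mul_sum]
    refine Finset.sum_le_sum fun j' _ => ?_
    calc βhk j' * ∑ i, X i j' * θ1 i ≤ |βhk j' * ∑ i, X i j' * θ1 i| := le_abs_self _
      _ = |βhk j'| * |∑ i, X i j' * θ1 i| := abs_mul _ _
      _ ≤ |βhk j'| * (n:ℝ) := mul_le_mul_of_nonneg_left (hθ1_bound j') (abs_nonneg _)
      _ = (n:ℝ) * |βhk j'| := mul_comm _ _
  have e3 : ∑ i, X.mulVec βhk1 i * θ1 i = (n:ℝ) * ∑ j', |βhk1 j'| := by
    rw [dot_mulVec, Finset.mul_sum]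
    refine Finset.sum_congr rfl fun j' _ => ?_
    calc βhk1 j' * ∑ i, X i j' * θ1 i
        = (∑ i, X i j' * (y i - X.mulVec βhk1 i)) * βhk1 j' / lamk1 := by
          rw [hθ1_x j']; ring
      _ = (n:ℝ) * lamk1 * |βhk1 j'| / lamk1 := by rw [(K2 j').2]
      _ = (n:ℝ) * |βhk1 j'| := by field_simp
  have e4 : ∑ i, X.mulVec βhk1 i * θk i ≤ (n:ℝ) * ∑ j', |βhk1 j'| := by
    rw [dot_mulVec, Finset.mul_sum]
    refine Finset.sum_le_sum fun j' _ => ?_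
    calc βhk1 j' * ∑ i, X i j' * θk i ≤ |βhk1 j' * ∑ i, X i j' * θk i| := le_abs_self _
      _ = |βhk1 j'| * |∑ i, X i j' * θk i| := abs_mul _ _
      _ ≤ |βhk1 j'| * (n:ℝ) := mul_le_mul_of_nonneg_left (hθk_bound j') (abs_nonneg _)
      _ = (n:ℝ) * |βhk1 j'| := mul_comm _ _
  -- variational inequalities
  have A1 : ∑ i, X.mulVec βhk i * u i ≤ 0 := by
    have hsplit : ∑ i, X.mulVec βhk i * u i
        = ∑ i, X.mulVec βhk i * θ1 i - ∑ i, X.mulVec βhk i * θk i := by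
      rw [← Finset.sum_sub_distrib]
      exact Finset.sum_congr rfl fun i _ => by simp only [hudef]; ring
    rw [hsplit, e1]; linarith only [e2]
  have A2 : 0 ≤ ∑ i, X.mulVec βhk1 i * u i := by
    have hsplit : ∑ i, X.mulVec βhk1 i * u i
        = ∑ i, X.mulVec βhk1 i * θ1 i - ∑ i, X.mulVec βhk1 i * θk i := by
      rw [← Finset.sum_sub_distrib]
      exact Finset.sum_congr rfl fun i _ => by simp only [hudef]; ring
    rw [hsplit, e3]; linarith only [e4]
  -- scalar abbreviations
  set P : ℝ := ∑ i, y i * u i with hP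
  set Q : ℝ := ∑ i, θk i * u i with hQ
  set U : ℝ := ∑ i, u i ^ 2 with hU
  set W : ℝ := ∑ i, w i * u i with hW
  set R : ℝ := ∑ i, X.mulVec βhk i * u i with hR
  -- pointwise reconstructions
  have hB1y : ∀ i, X.mulVec βhk1 i = y i - lamk1 * θ1 i := by
    intro i; simp only [hθ1]; field_simp; ring
  have hBky : ∀ i, X.mulVec βhk i = y i - lamk * θk i := by
    intro i; simp only [hθk]; field_simp; ring
  have sB : lamk1 * (Q + U) ≤ P := by
    have hθ1u : ∑ i, θ1 i * u i = Q + U := by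
      rw [hQ, hU, ← Finset.sum_add_distrib]
      exact Finset.sum_congr rfl fun i _ => by simp only [hudef]; ring
    have : ∑ i, X.mulVec βhk1 i * u i = P - lamk1 * (Q + U) := by
      rw [← hθ1u]
      calc ∑ i, X.mulVec βhk1 i * u i
          = ∑ i, (y i * u i - lamk1 * (θ1 i * u i)) := by
            exact Finset.sum_congr rfl fun i _ => by rw [hB1y i]; ring
        _ = P - lamk1 * ∑ i, θ1 i * u i := by
            rw [Finset.sum_sub_distrib, ← Finset.mul_sum, hP]
    linarith only [A2, this]
  have sR : R = P - lamk * Q := by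
    calc R = ∑ i, (y i * u i - lamk * (θk i * u i)) := by
          rw [hR]
          exact Finset.sum_congr rfl fun i _ => by rw [hBky i]; ring
      _ = P - lamk * Q := by rw [Finset.sum_sub_distrib, ← Finset.mul_sum, hP, hQ]
  have sW : W = P - (a / sBB) * R := by
    calc W = ∑ i, (y i * u i - (a / sBB) * (X.mulVec βhk i * u i)) := by
          rw [hW]
          exact Finset.sum_congr rfl fun i _ => by simp only [hwdef]; ring
      _ = P - (a / sBB) * R := by rw [Finset.sum_sub_distrib, ← Finset.mul_sum, hP, hR]
  -- a ≥ 0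
  have ha0 : 0 ≤ a := by
    have hsplit : a = sBB + ∑ i, X.mulVec βhk i * (y i - X.mulVec βhk i) := by
      rw [ha, hsBBdef, ← Finset.sum_add_distrib]
      exact Finset.sum_congr rfl fun i _ => by ring
    have hdot : ∑ i, X.mulVec βhk i * (y i - X.mulVec βhk i)
        = ∑ j', βhk j' * ∑ i, X i j' * (y i - X.mulVec βhk i) := dot_mulVec _ _ _ _ _
    have hterm : ∀ j', βhk j' * ∑ i, X i j' * (y i - X.mulVec βhk i)
        = (n:ℝ) * lamk * |βhk j'| := fun j' => by
      rw [mul_comm]; exact (K1 j').2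
    have hnn : 0 ≤ ∑ i, X.mulVec βhk i * (y i - X.mulVec βhk i) := by
      rw [hdot]
      exact Finset.sum_nonneg fun j' _ => by
        rw [hterm j']; positivity
    linarith only [hsplit, hnn, hsBB]
  -- core geometric bound : U ≤ c W
  have G4 : U ≤ c * W := by
    have m1 := mul_le_mul_of_nonneg_left sB hlk.le
    have m2 : lamk * (lamk1 * Q) = lamk1 * P - lamk1 * R := by
      linear_combination lamk1 * sR
    have m3 : lamk1 * R ≤ 0 := by
      have := mul_nonneg h1.le (neg_nonneg.mpr A1); linarith only [this]
    have t1 : lamk * lamk1 * U ≤ (lamk - lamk1) * P := by linarith only [m1, m2, m3]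
    have m4 : 0 ≤ (lamk - lamk1) * ((a / sBB) * (-R)) :=
      mul_nonneg (by linarith) (mul_nonneg (div_nonneg ha0 hsBB.le) (by linarith [A1]))
    have sW' : (lamk - lamk1) * W = (lamk - lamk1) * P - (lamk - lamk1) * ((a / sBB) * R) := by
      rw [sW]; ring
    have t2 : (lamk - lamk1) * P ≤ (lamk - lamk1) * W := by linarith only [sW', m4]
    have hk0 : lamk ≠ 0 := ne_of_gt hlk
    have hk10 : lamk1 ≠ 0 := ne_of_gt h1
    have t3 : (lamk - lamk1) * W = (lamk * lamk1) * (c * W) := by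
      rw [hc]; field_simp
    have hfinal : lamk * lamk1 * U ≤ lamk * lamk1 * (c * W) := by
      linarith only [t1, t2, t3]
    exact le_of_mul_le_mul_left hfinal (by positivity)
  -- ball bound
  have G5 : ∑ i, z i ^ 2 ≤ (c / 2) ^ 2 * ∑ i, w i ^ 2 := by
    have expand : ∑ i, z i ^ 2 = U - c * W + (c / 2) ^ 2 * ∑ i, w i ^ 2 := by
      have hpt : ∀ i, z i ^ 2 = u i ^ 2 - c * (w i * u i) + (c / 2) ^ 2 * w i ^ 2 := by
        intro i; simp only [hzdef]; ring
      rw [Finset.sum_congr rfl fun i _ => hpt i, Finset.sum_add_distrib,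
        Finset.sum_sub_distrib, ← Finset.mul_sum, ← Finset.mul_sum, ← hU, ← hW]
    linarith only [G4, expand]
  have G6 : ∑ i, w i ^ 2 = (∑ i, (y i) ^ 2) - a ^ 2 / sBB := by
    have hpt : ∀ i, w i ^ 2
        = (y i) ^ 2 - 2 * (a / sBB) * (y i * X.mulVec βhk i)
          + (a / sBB) ^ 2 * (X.mulVec βhk i) ^ 2 := by
      intro i; simp only [hwdef]; ring
    rw [Finset.sum_congr rfl fun i _ => hpt i, Finset.sum_add_distrib,
      Finset.sum_sub_distrib, ← Finset.mul_sum, ← Finset.mul_sum, ← ha, ← hsBBdef]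
    field_simp
    ring
  -- Cauchy–Schwarz step
  have hxn : ∑ i, (X i j) ^ 2 = (n:ℝ) := by
    have := hx1 j
    field_simp at this
    linarith
  have hwnn : 0 ≤ ∑ i, w i ^ 2 := Finset.sum_nonneg fun i _ => sq_nonneg _
  have CS : (∑ i, X i j * z i) ^ 2 ≤ (n:ℝ) * ((c / 2) ^ 2 * ∑ i, w i ^ 2) := by
    calc (∑ i, X i j * z i) ^ 2
        ≤ (∑ i, (X i j) ^ 2) * ∑ i, z i ^ 2 :=
          Finset.sum_mul_sq_le_sq_mul_sq _ _ _
      _ = (n:ℝ) * ∑ i, z i ^ 2 := by rw [hxn]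
      _ ≤ (n:ℝ) * ((c / 2) ^ 2 * ∑ i, w i ^ 2) :=
          mul_le_mul_of_nonneg_left G5 hN.le
  have habsz : |∑ i, X i j * z i| ≤ (c / 2) * Real.sqrt ((n:ℝ) * ∑ i, w i ^ 2) := by
    rw [← Real.sqrt_sq_eq_abs]
    have hrw : (c / 2) * Real.sqrt ((n:ℝ) * ∑ i, w i ^ 2)
        = Real.sqrt ((c / 2) ^ 2 * ((n:ℝ) * ∑ i, w i ^ 2)) := by
      rw [Real.sqrt_mul (sq_nonneg _), Real.sqrt_sq (by positivity : (0:ℝ) ≤ c / 2)]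
    rw [hrw]
    exact Real.sqrt_le_sqrt (by linarith only [CS])
  have hsqrt_eq : Real.sqrt ((n : ℝ) * (∑ i, (y i) ^ 2) - (n : ℝ) * a ^ 2 / sBB)
      = Real.sqrt ((n:ℝ) * ∑ i, w i ^ 2) := by
    congr 1
    rw [G6]
    ring
  -- decomposition
  have hdec : ∑ i, X i j * θ1 i
      = (∑ i, X i j * θk i + (c / 2) * ∑ i, X i j * w i) + ∑ i, X i j * z i := by
    have hpt : ∀ i, X i j * θ1 i
        = X i j * θk i + (c / 2) * (X i j * w i) + X i j * z i := by
      intro i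
      have : θ1 i = θk i + (c / 2) * w i + z i := by
        simp only [hzdef, hudef]; ring
      rw [this]; ring
    rw [Finset.sum_congr rfl fun i _ => hpt i, Finset.sum_add_distrib,
      Finset.sum_add_distrib, ← Finset.mul_sum]
  have hxw : ∑ i, X i j * w i
      = (∑ i, X i j * y i) - (a / sBB) * ∑ i, X i j * X.mulVec βhk i := by
    have hpt : ∀ i, X i j * w i
        = X i j * y i - (a / sBB) * (X i j * X.mulVec βhk i) := by
      intro i; simp only [hwdef]; ring
    rw [Finset.sum_congr rfl fun i _ => hpt i, Finset.sum_sub_distrib, ← Finset.mul_sum]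
  have hlhs : (∑ i, X i j * (y i - X.mulVec βhk i)) / lamk +
        (c / 2) * ((∑ i, X i j * y i) -
          a * (∑ i, X i j * X.mulVec βhk i) / sBB)
      = ∑ i, X i j * θk i + (c / 2) * ∑ i, X i j * w i := by
    rw [hθk_x j, hxw]; ring
  -- final bound
  have hfin : |∑ i, X i j * θ1 i| < (n:ℝ) := by
    have h' := hrule
    rw [hsqrt_eq, hlhs] at h'
    rw [hdec]
    calc |(∑ i, X i j * θk i + (c / 2) * ∑ i, X i j * w i) + ∑ i, X i j * z i|
        ≤ |∑ i, X i j * θk i + (c / 2) * ∑ i, X i j * w i| + |∑ i, X i j * z i| :=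
          abs_add_le _ _
      _ < (n:ℝ) := by linarith only [habsz, h']
  have hE : |∑ i, X i j * (y i - X.mulVec βhk1 i)| < (n:ℝ) * lamk1 := by
    rw [hθ1_x j, abs_div, abs_of_pos h1, div_lt_iff₀ h1] at hfin
    linarith only [hfin]
  by_contra hne
  have hb : 0 < |βhk1 j| := abs_pos.mpr hne
  have hk2 := (K2 j).2
  have hle : (∑ i, X i j * (y i - X.mulVec βhk1 i)) * βhk1 j
      ≤ |∑ i, X i j * (y i - X.mulVec βhk1 i)| * |βhk1 j| := by
    calc (∑ i, X i j * (y i - X.mulVec βhk1 i)) * βhk1 j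
        ≤ |(∑ i, X i j * (y i - X.mulVec βhk1 i)) * βhk1 j| := le_abs_self _
      _ = |∑ i, X i j * (y i - X.mulVec βhk1 i)| * |βhk1 j| := abs_mul _ _
  linarith only [mul_lt_mul_of_pos_right hE hb, hk2, hle]
end
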